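/- arXiv:0910.1722 — 2 statements merged into one kernel-verified Lean document; each statement's English description precedes it below -/
import Mathlib

section
/- There is no regular icosahedron all of whose 12 vertices have integer coordinates in ℝ³. -/
/-- The golden ratio. -/
noncomputable def goldenR : ℝ := (1 + Real.sqrt 5) / 2

/-- The vertices of the standard regular icosahedron: all cyclic permutations of
`(0, ±1, ±φ)` where `φ` is the golden ratio. -/
noncomputable def stdIcosahedron : Set (EuclideanSpace ℝ (Fin 3)) :=
  {v | ∃ s t : ℝ, (s = 1 ∨ s = -1) ∧ (t = 1 ∨ t = -1) ∧
    (v = (WithLp.equiv 2 (Fin 3 → ℝ)).symm ![0, s, t * goldenR] ∨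
     v = (WithLp.equiv 2 (Fin 3 → ℝ)).symm ![s, t * goldenR, 0] ∨
     v = (WithLp.equiv 2 (Fin 3 → ℝ)).symm ![t * goldenR, 0, s])}

/-- A set `S ⊆ ℝ³` is (the vertex set of) a regular icosahedron if it is the image of the
standard icosahedron's vertex set under a similarity transformation of `ℝ³`. -/
def IsRegularIcosahedron (S : Set (EuclideanSpace ℝ (Fin 3))) : Prop :=
  ∃ (r : ℝ) (f : EuclideanSpace ℝ (Fin 3) → EuclideanSpace ℝ (Fin 3)), 0 < r ∧
    (∀ p ∈ stdIcosahedron, ∀ q ∈ stdIcosahedron, dist (f p) (f q) = r * dist p q) ∧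
    S = f '' stdIcosahedron

/-!
Squared distances between lattice points are integers, so the ratio of two of them is rational.
A similarity preserves ratios of distances, but the standard icosahedron has two squared
distances, `4` (an edge) and `4φ²` (a diagonal of a golden rectangle), whose ratio `φ² = φ + 1`
is irrational.
-/

lemma irrational_goldenR_sq : Irrational (goldenR ^ 2) := by
  have h : goldenR ^ 2 = Real.goldenRatio + 1 := Real.goldenRatio_sq
  rw [h]
  exact_mod_cast Real.goldenRatio_irrational.add_natCast 1

lemma EuclideanSpace.exists_intCast_eq_dist_sq {ι : Type*} [Fintype ι]
    {v w : EuclideanSpace ℝ ι} (hv : ∀ i, ∃ z : ℤ, v i = z) (hw : ∀ i, ∃ z : ℤ, w i = z) :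
    ∃ z : ℤ, dist v w ^ 2 = z := by
  choose zv hzv using hv
  choose zw hzw using hw
  refine ⟨∑ i, (zv i - zw i) ^ 2, ?_⟩
  rw [PiLp.dist_sq_eq_of_L2]
  push_cast
  refine Finset.sum_congr rfl fun i _ => ?_
  rw [Real.dist_eq, sq_abs, hzv, hzw]

lemma dist_sq_div_dist_sq_of_dist_eq_mul {α β : Type*} [PseudoMetricSpace α]
    [PseudoMetricSpace β] {f : α → β} {r : ℝ} (hr : r ≠ 0) {p q u v : α}
    (hpq : dist (f p) (f q) = r * dist p q) (huv : dist (f u) (f v) = r * dist u v) :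
    dist (f p) (f q) ^ 2 / dist (f u) (f v) ^ 2 = dist p q ^ 2 / dist u v ^ 2 := by
  rw [hpq, huv, mul_pow, mul_pow, mul_div_mul_left _ _ (pow_ne_zero 2 hr)]

lemma exists_mem_stdIcosahedron_dist_sq_div_eq_goldenR_sq :
    ∃ p ∈ stdIcosahedron, ∃ q ∈ stdIcosahedron, ∃ u ∈ stdIcosahedron,
      dist p u ^ 2 / dist p q ^ 2 = goldenR ^ 2 := by
  refine ⟨(WithLp.equiv 2 (Fin 3 → ℝ)).symm ![0, 1, 1 * goldenR],
    ⟨1, 1, Or.inl rfl, Or.inl rfl, Or.inl rfl⟩,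
    (WithLp.equiv 2 (Fin 3 → ℝ)).symm ![0, -1, 1 * goldenR],
    ⟨-1, 1, Or.inr rfl, Or.inl rfl, Or.inl rfl⟩,
    (WithLp.equiv 2 (Fin 3 → ℝ)).symm ![0, 1, -1 * goldenR],
    ⟨1, -1, Or.inl rfl, Or.inr rfl, Or.inl rfl⟩, ?_⟩
  simp only [PiLp.dist_sq_eq_of_L2, Fin.sum_univ_three, Real.dist_eq, sq_abs,
    WithLp.equiv_symm_apply, Matrix.cons_val_zero, Matrix.cons_val_one, Matrix.cons_val]
  ring

/-- There is no regular icosahedron all of whose vertices have integer coordinates. -/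
theorem no_integer_regular_icosahedron :
    ¬ ∃ S : Set (EuclideanSpace ℝ (Fin 3)),
      IsRegularIcosahedron S ∧ ∀ v ∈ S, ∀ i : Fin 3, ∃ z : ℤ, v i = z := by
  rintro ⟨S, ⟨r, f, hr, hf, rfl⟩, hS⟩
  obtain ⟨p, hp, q, hq, u, hu, hratio⟩ := exists_mem_stdIcosahedron_dist_sq_div_eq_goldenR_sq
  have integral : ∀ v ∈ stdIcosahedron, ∀ i, ∃ z : ℤ, f v i = z :=
    fun v hv => hS _ ⟨v, hv, rfl⟩
  obtain ⟨a, ha⟩ := EuclideanSpace.exists_intCast_eq_dist_sq (integral p hp) (integral u hu)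
  obtain ⟨b, hb⟩ := EuclideanSpace.exists_intCast_eq_dist_sq (integral p hp) (integral q hq)
  refine irrational_goldenR_sq.ne_rational a b ?_
  rw [← hratio, ← dist_sq_div_dist_sq_of_dist_eq_mul hr.ne' (hf p hp u hu) (hf p hp q hq), ha, hb]
end

section
/- If a cube with vertices in ℤ³ is irreducible (it is not the image of another cube with vertices in ℤ³ under a translation by an integer vector combined with a dilation by an integer factor of absolute value greater than 1), then its side length is an odd natural number. -/
/-! Squares are `0` or `1` mod 4, so if `4` divides a sum of three squares then all three
summands are even. If the side length `n` is even then every edge vector `uᵢ` has squared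
length `n² ≡ 0 (mod 4)`, hence `uᵢ = 2 • wᵢ`, and the cube is the dilation by `2`, translated
by `v`, of the integer cube spanned by `w₁, w₂, w₃` at the origin. -/

open Matrix

/-- `(v, u₁, u₂, u₃)` describes a cube in `ℤ³`: base vertex `v` and pairwise orthogonal
nonzero edge vectors of equal (squared) norm. -/
def IsCubeZ (v u₁ u₂ u₃ : Fin 3 → ℤ) : Prop :=
  u₁ ⬝ᵥ u₂ = 0 ∧ u₁ ⬝ᵥ u₃ = 0 ∧ u₂ ⬝ᵥ u₃ = 0 ∧
  u₁ ⬝ᵥ u₁ = u₂ ⬝ᵥ u₂ ∧ u₂ ⬝ᵥ u₂ = u₃ ⬝ᵥ u₃ ∧ u₁ ≠ 0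

/-- The eight vertices of the cube `(v, u₁, u₂, u₃)`. -/
def cubeVertsZ (v u₁ u₂ u₃ : Fin 3 → ℤ) : Set (Fin 3 → ℤ) :=
  {p | ∃ ε : Fin 3 → Bool, p = v + (if ε 0 then u₁ else 0) + (if ε 1 then u₂ else 0) +
    (if ε 2 then u₃ else 0)}

lemma ZMod.two_mul_eq_zero_of_mul_self_add_mul_self_add_mul_self_eq_zero :
    ∀ x y z : ZMod 4, x * x + y * y + z * z = 0 → 2 * x = 0 ∧ 2 * y = 0 ∧ 2 * z = 0 := by
  decide

lemma Int.two_dvd_of_four_dvd_mul_self_add_mul_self_add_mul_self {a b c : ℤ}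
    (h : 4 ∣ a * a + b * b + c * c) : 2 ∣ a ∧ 2 ∣ b ∧ 2 ∣ c := by
  have hmod : ((a * a + b * b + c * c : ℤ) : ZMod 4) = 0 :=
    (ZMod.intCast_zmod_eq_zero_iff_dvd _ 4).mpr h
  push_cast at hmod
  have four_dvd_two_mul {x : ℤ} (hx : 2 * (x : ZMod 4) = 0) : 4 ∣ 2 * x :=
    (ZMod.intCast_zmod_eq_zero_iff_dvd _ 4).mp (by push_cast; exact hx)
  obtain ⟨ha, hb, hc⟩ :=
    ZMod.two_mul_eq_zero_of_mul_self_add_mul_self_add_mul_self_eq_zero _ _ _ hmod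
  have := four_dvd_two_mul ha
  have := four_dvd_two_mul hb
  have := four_dvd_two_mul hc
  omega

lemma exists_eq_two_smul_of_four_dvd_dotProduct_self {u : Fin 3 → ℤ} (h : 4 ∣ u ⬝ᵥ u) :
    ∃ w : Fin 3 → ℤ, u = (2 : ℤ) • w := by
  simp only [dotProduct, Fin.sum_univ_three] at h
  obtain ⟨h0, h1, h2⟩ := Int.two_dvd_of_four_dvd_mul_self_add_mul_self_add_mul_self h
  refine ⟨fun j => u j / 2, funext fun j => ?_⟩
  fin_cases j <;> simp <;> omega

lemma IsCubeZ.of_smul {v w w₁ w₂ w₃ : Fin 3 → ℤ} {k : ℤ} (hk : k ≠ 0)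
    (h : IsCubeZ v (k • w₁) (k • w₂) (k • w₃)) : IsCubeZ w w₁ w₂ w₃ := by
  have hkk : k * k ≠ 0 := mul_ne_zero hk hk
  simp only [IsCubeZ, smul_dotProduct, dotProduct_smul, smul_eq_mul, ← mul_assoc,
    mul_eq_zero, hkk, false_or, mul_right_inj' hkk, smul_ne_zero_iff, hk, ne_eq,
    not_false_eq_true, true_and] at h
  exact h

lemma cubeVertsZ_smul_add (k : ℤ) (w w₁ w₂ w₃ t : Fin 3 → ℤ) :
    cubeVertsZ (k • w + t) (k • w₁) (k • w₂) (k • w₃) =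
      (fun p => k • p + t) '' cubeVertsZ w w₁ w₂ w₃ := by
  ext p
  simp only [cubeVertsZ, Set.mem_ofPred_eq, Set.mem_image]
  constructor
  · rintro ⟨ε, rfl⟩
    refine ⟨_, ⟨ε, rfl⟩, ?_⟩
    simp only [smul_add, smul_zero, smul_ite]
    abel
  · rintro ⟨q, ⟨ε, rfl⟩, rfl⟩
    refine ⟨ε, ?_⟩
    simp only [smul_add, smul_zero, smul_ite]
    abel

/-- An irreducible cube in `ℤ³` (one which is not obtained from another integer cube by a
dilation by an integer factor of absolute value `> 1` followed by an integer translation)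
has odd side length. -/
theorem irreducible_cube_side_odd (v u₁ u₂ u₃ : Fin 3 → ℤ)
    (hcube : IsCubeZ v u₁ u₂ u₃)
    (hirr : ¬ ∃ (w w₁ w₂ w₃ : Fin 3 → ℤ) (k : ℤ) (t : Fin 3 → ℤ),
      IsCubeZ w w₁ w₂ w₃ ∧ 1 < |k| ∧
      cubeVertsZ v u₁ u₂ u₃ = (fun p => k • p + t) '' cubeVertsZ w w₁ w₂ w₃)
    (n : ℕ) (hn : u₁ ⬝ᵥ u₁ = (n : ℤ) ^ 2) :
    Odd n := by
  by_contra hodd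
  obtain ⟨m, rfl⟩ := Nat.not_odd_iff_even.mp hodd
  have h₁₂ : u₁ ⬝ᵥ u₁ = u₂ ⬝ᵥ u₂ := hcube.2.2.2.1
  have h₂₃ : u₂ ⬝ᵥ u₂ = u₃ ⬝ᵥ u₃ := hcube.2.2.2.2.1
  have h₁ : 4 ∣ u₁ ⬝ᵥ u₁ := ⟨(m : ℤ) ^ 2, by rw [hn]; push_cast; ring⟩
  obtain ⟨w₁, rfl⟩ := exists_eq_two_smul_of_four_dvd_dotProduct_self h₁
  obtain ⟨w₂, rfl⟩ := exists_eq_two_smul_of_four_dvd_dotProduct_self (h₁₂ ▸ h₁)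
  obtain ⟨w₃, rfl⟩ := exists_eq_two_smul_of_four_dvd_dotProduct_self (h₂₃ ▸ h₁₂ ▸ h₁)
  refine hirr ⟨0, w₁, w₂, w₃, 2, v, hcube.of_smul two_ne_zero, by norm_num, ?_⟩
  simpa using cubeVertsZ_smul_add 2 0 w₁ w₂ w₃ v
end
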